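/- Let P and Q be probability distributions on a type Y, let ε ≥ 0 and δ ≥ 0, and suppose that for every set E ⊆ Y, Pr_{X ~ Q}[X ∈ E] ≤ e^ε · Pr_{X ~ P}[X ∈ E] + δ. Then for any a, b ∈ Y with a ≠ b, Pr_{X ~ P}[X ≠ a] + Pr_{X ~ Q}[X ≠ b] ≥ e^{−ε} · (1 − δ). -/
import Mathlib

open scoped ENNReal

noncomputable def pr {Y : Type*} (p : PMF Y) (S : Set Y) : ℝ :=
  (p.toOuterMeasure S).toReal

lemma pr_ne_top {Y : Type*} (p : PMF Y) (S : Set Y) : p.toOuterMeasure S ≠ ⊤ := by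
  have hle : p.toOuterMeasure S ≤ p.toOuterMeasure Set.univ := p.toOuterMeasure.mono (Set.subset_univ S)
  have : p.toOuterMeasure Set.univ = 1 := by
    rw [PMF.toOuterMeasure_apply]; simp [p.tsum_coe]
  exact ne_top_of_le_ne_top (by simp [this]) hle

lemma pr_univ {Y : Type*} (p : PMF Y) : pr p Set.univ = 1 := by
  unfold pr
  rw [PMF.toOuterMeasure_apply]
  simp [p.tsum_coe]

lemma pr_add_compl {Y : Type*} (p : PMF Y) (S : Set Y) : pr p S + pr p Sᶜ = 1 := by
  unfold pr
  rw [← ENNReal.toReal_add (pr_ne_top p S) (pr_ne_top p Sᶜ)]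
  rw [PMF.toOuterMeasure_apply, PMF.toOuterMeasure_apply, ← ENNReal.tsum_add]
  have : ∀ x, S.indicator p x + Sᶜ.indicator p x = p x := fun x => by
    by_cases hx : x ∈ S <;> simp [Set.indicator, hx]
  simp only [this, p.tsum_coe, ENNReal.toReal_one]

lemma pr_mono {Y : Type*} (p : PMF Y) {S T : Set Y} (h : S ⊆ T) : pr p S ≤ pr p T :=
  ENNReal.toReal_mono (pr_ne_top p T) (p.toOuterMeasure.mono h)

lemma pr_nonneg {Y : Type*} (p : PMF Y) (S : Set Y) : 0 ≤ pr p S := ENNReal.toReal_nonneg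
/-- If `Q(E) ≤ e^ε P(E) + δ` for every event `E`, then for any distinct `a, b`,
`Pr_P[X ≠ a] + Pr_Q[X ≠ b] ≥ e^{-ε}(1 - δ)`. -/
theorem indist_two_points {Y : Type*} (P Q : PMF Y) (ε δ : ℝ)
    (hε : 0 ≤ ε) (hδ : 0 ≤ δ)
    (h : ∀ E : Set Y, pr Q E ≤ Real.exp ε * pr P E + δ)
    (a b : Y) (hab : a ≠ b) :
    Real.exp (-ε) * (1 - δ) ≤ pr P {y | y ≠ a} + pr Q {y | y ≠ b} := by
  have hset : ({y | y ≠ a} : Set Y) = ({a} : Set Y)ᶜ := by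
    ext y; simp [Set.mem_compl_iff]
  have hQa : pr Q {a} + pr Q {y | y ≠ a} = 1 := by
    rw [hset]; exact pr_add_compl Q {a}
  have h1 := h {y | y ≠ a}
  have h2 : pr Q {a} ≤ pr Q {y | y ≠ b} :=
    pr_mono Q (by intro y hy; simp at hy; simp [hy, hab])
  have hexp : Real.exp (-ε) ≤ 1 := Real.exp_le_one_iff.mpr (by linarith)
  have hx : 0 ≤ pr Q {a} := pr_nonneg Q _
  have hmul : Real.exp (-ε) * Real.exp ε = 1 := by
    rw [← Real.exp_add]; simp
  have hpos : 0 < Real.exp (-ε) := Real.exp_pos _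
  nlinarith [pr_nonneg P {y | y ≠ a}, mul_le_mul_of_nonneg_left h1 hpos.le]
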